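/- Suppose in addition that X is connected, and index the spectral data of M_{0_X} so that λ_{0_X,1}=1 and P_{0_X,1} is the orthogonal projection onto the constant functions on X. Then for every integer k ≥ 0 and every (ω,x) ∈ 𝓛(X): ‖𝓜_X^k(δ_ω⊗δ_x) − (2^{|X|}·|X|)^{−1}·1_{𝓛(X)}‖_TV² ≤ |X| · { Σ_{θ∈{0,1}^X, θ≠0_X} Σ_{j=1}^{h(θ)} |λ_{θ,j}|^{2k}·‖P_{θ,j}δ_x‖²_{L(X)} + Σ_{j=2}^{h(0_X)} |λ_{0_X,j}|^{2k}·‖P_{0_X,j}δ_x‖²_{L(X)} }. -/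

import Mathlib

set_option linter.unusedSectionVars false
set_option linter.unusedVariables false


open Finset

noncomputable section

variable {V : Type*} [Fintype V] [DecidableEq V]

/-- The character `χ_θ(ω) = (−1)^{Σ_x θ(x)·ω(x)}` on lamp configurations `{0,1}^X`. -/
def lampChi (θ ω : V → ZMod 2) : ℂ := (-1 : ℂ) ^ (∑ x : V, (θ x * ω x).val)

/-- `δ_x ∈ {0,1}^X`, the indicator configuration of the vertex `x`. -/
def lampDelta (x : V) : V → ZMod 2 := fun z => if z = x then 1 else 0

/-- The Markov operator `𝓜_X` of the simple random walk on the vertex lamplighter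
graph `𝓛(X)`. -/
def vertexLampM (G : SimpleGraph V) [DecidableRel G.Adj]
    (F : (V → ZMod 2) × V → ℂ) : (V → ZMod 2) × V → ℂ :=
  fun p =>
    (1 / (4 * (G.degree p.2 : ℂ))) *
      ∑ y ∈ G.neighborFinset p.2,
        (F (p.1, y) + F (p.1 + lampDelta p.2, y) + F (p.1 + lampDelta y, y) +
          F (p.1 + lampDelta p.2 + lampDelta y, y))

/-- The operator `M_θ : L(X) → L(X)`. -/
def vertexMtheta (G : SimpleGraph V) [DecidableRel G.Adj] (θ : V → ZMod 2)
    (f : V → ℂ) : V → ℂ :=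
  fun x =>
    if θ x = 0 then
      (1 / (G.degree x : ℂ)) * ∑ y ∈ (G.neighborFinset x).filter (fun y => θ y = 0), f y
    else 0

lemma zmod2_add_eq_zero : ∀ a b : ZMod 2, a + b = 0 ↔ a = b := by decide

lemma neg_one_pow_val_add (a b : ZMod 2) :
    (-1:ℂ)^((a+b).val) = (-1:ℂ)^a.val * (-1:ℂ)^b.val := by
  obtain rfl | rfl : a = 0 ∨ a = 1 := (by revert a; decide) <;>
    obtain rfl | rfl : b = 0 ∨ b = 1 := (by revert b; decide) <;>
    norm_num [ZMod.val_one, show ((2:ZMod 2)).val = 0 from rfl]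

lemma lampChi_prod (θ ω : V → ZMod 2) :
    lampChi θ ω = ∏ x : V, (-1 : ℂ) ^ (θ x * ω x).val :=
  (Finset.prod_pow_eq_pow_sum _ _ _).symm

lemma lampChi_add_right (θ ω ω' : V → ZMod 2) :
    lampChi θ (ω + ω') = lampChi θ ω * lampChi θ ω' := by
  rw [lampChi_prod, lampChi_prod, lampChi_prod, ← Finset.prod_mul_distrib]
  refine Finset.prod_congr rfl fun z _ => ?_
  rw [Pi.add_apply, mul_add, neg_one_pow_val_add]

lemma lampChi_comm (θ ω : V → ZMod 2) : lampChi θ ω = lampChi ω θ := by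
  simp [lampChi, mul_comm]

lemma lampChi_add_left (θ θ' ω : V → ZMod 2) :
    lampChi (θ + θ') ω = lampChi θ ω * lampChi θ' ω := by
  rw [lampChi_comm, lampChi_add_right, lampChi_comm θ, lampChi_comm θ']

lemma lampChi_zero_left (ω : V → ZMod 2) : lampChi (0 : V → ZMod 2) ω = 1 := by
  simp [lampChi]

lemma lampChi_zero_right (θ : V → ZMod 2) : lampChi θ 0 = 1 := by
  rw [lampChi_comm, lampChi_zero_left]

lemma lampChi_mul_self (θ ω : V → ZMod 2) : lampChi θ ω * lampChi θ ω = 1 := by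
  rw [lampChi, ← pow_add, ← two_mul, pow_mul]; norm_num

lemma conj_lampChi (θ ω : V → ZMod 2) :
    (starRingEnd ℂ) (lampChi θ ω) = lampChi θ ω := by
  simp [lampChi]

lemma lampChi_delta (θ : V → ZMod 2) (w : V) :
    lampChi θ (lampDelta w) = (-1:ℂ) ^ (θ w).val := by
  rw [lampChi]
  congr 1
  rw [show (∑ z : V, (θ z * lampDelta w z).val) = ∑ z : V, if z = w then (θ z).val else 0 from ?_,
    Finset.sum_ite_eq' univ w _, if_pos (mem_univ w)]
  refine Finset.sum_congr rfl fun z _ => ?_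
  by_cases hz : z = w <;> simp [lampDelta, hz]

lemma sum_lampChi (θ : V → ZMod 2) :
    ∑ ω : V → ZMod 2, lampChi θ ω
      = if θ = 0 then ((2:ℂ) ^ Fintype.card V) else 0 := by
  split_ifs with h0
  · subst h0
    simp only [lampChi_zero_left, Finset.sum_const, card_univ]
    rw [Fintype.card_fun]
    simp [ZMod.card]
  · obtain ⟨x0, hx0⟩ := Function.ne_iff.mp h0
    have hx0' : θ x0 ≠ 0 := hx0
    have hx1 : θ x0 = 1 := by
      have hall : ∀ a : ZMod 2, a ≠ 0 → a = 1 := by decide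
      exact hall _ hx0'
    have he : ∑ ω : V → ZMod 2, lampChi θ (ω + lampDelta x0)
        = ∑ ω : V → ZMod 2, lampChi θ ω :=
      Fintype.sum_equiv (Equiv.addRight (lampDelta x0)) _ _ (fun ω => rfl)
    have he2 : ∀ ω, lampChi θ (ω + lampDelta x0) = - lampChi θ ω := by
      intro ω
      rw [lampChi_add_right, lampChi_delta, hx1]
      norm_num [ZMod.val_one]
    rw [Finset.sum_congr rfl (fun ω _ => he2 ω), Finset.sum_neg_distrib] at he
    have h2 : (2:ℂ) * (∑ ω : V → ZMod 2, lampChi θ ω) = 0 := by linear_combination - he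
    simpa using h2

lemma sum_lampChi_mul (θ θ' : V → ZMod 2) :
    ∑ ω : V → ZMod 2, lampChi θ ω * lampChi θ' ω
      = if θ = θ' then ((2:ℂ) ^ Fintype.card V) else 0 := by
  have : ∀ ω, lampChi θ ω * lampChi θ' ω = lampChi (θ + θ') ω :=
    fun ω => (lampChi_add_left θ θ' ω).symm
  rw [Finset.sum_congr rfl fun ω _ => this ω, sum_lampChi]
  congr 1
  simp only [eq_iff_iff]
  constructor
  · intro hh; funext w
    exact (zmod2_add_eq_zero _ _).mp (congrFun hh w)
  · intro hh; funext w
    exact (zmod2_add_eq_zero (θ w) (θ' w)).mpr (congrFun hh w)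

lemma sum_lampChi_mul' (ω ω' : V → ZMod 2) :
    ∑ θ : V → ZMod 2, lampChi θ ω * lampChi θ ω'
      = if ω = ω' then ((2:ℂ) ^ Fintype.card V) else 0 := by
  rw [Finset.sum_congr rfl fun θ _ => by rw [lampChi_comm θ ω, lampChi_comm θ ω']]
  exact sum_lampChi_mul ω ω'

lemma one_add_neg_one_pow (a : ZMod 2) :
    (1:ℂ) + (-1:ℂ)^a.val = if a = 0 then 2 else 0 := by
  obtain rfl | rfl : a = 0 ∨ a = 1 := (by revert a; decide) <;> norm_num [ZMod.val_one]

lemma vertexLampM_smul_sum {ι : Type*} (G : SimpleGraph V) [DecidableRel G.Adj]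
    (s : Finset ι) (c : ι → ℂ) (F : ι → ((V → ZMod 2) × V) → ℂ) :
    vertexLampM G (fun p => ∑ i ∈ s, c i * F i p)
      = fun p => ∑ i ∈ s, c i * vertexLampM G (F i) p := by
  funext p
  simp only [vertexLampM]
  rw [show (∑ y ∈ G.neighborFinset p.2,
      ((∑ i ∈ s, c i * F i (p.1, y)) + (∑ i ∈ s, c i * F i (p.1 + lampDelta p.2, y)) +
        (∑ i ∈ s, c i * F i (p.1 + lampDelta y, y)) +
        (∑ i ∈ s, c i * F i (p.1 + lampDelta p.2 + lampDelta y, y))))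
    = ∑ i ∈ s, ∑ y ∈ G.neighborFinset p.2,
        c i * (F i (p.1, y) + F i (p.1 + lampDelta p.2, y) + F i (p.1 + lampDelta y, y) +
          F i (p.1 + lampDelta p.2 + lampDelta y, y)) from ?_, Finset.mul_sum]
  · exact Finset.sum_congr rfl fun i _ => by rw [← Finset.mul_sum]; ring
  · rw [Finset.sum_comm]
    refine Finset.sum_congr rfl fun y _ => ?_
    rw [← Finset.sum_add_distrib, ← Finset.sum_add_distrib, ← Finset.sum_add_distrib]
    exact Finset.sum_congr rfl fun i _ => by ring

lemma vertexLampM_chi (G : SimpleGraph V) [DecidableRel G.Adj]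
    (hdeg : ∀ x : V, 0 < G.degree x) (θ : V → ZMod 2) (f : V → ℂ) :
    vertexLampM G (fun p => lampChi θ p.1 * f p.2)
      = fun p => lampChi θ p.1 * vertexMtheta G θ f p.2 := by
  funext p
  obtain ⟨ω', w⟩ := p
  have hd : ((G.degree w : ℂ)) ≠ 0 := Nat.cast_ne_zero.2 (hdeg w).ne'
  simp only [vertexLampM, vertexMtheta]
  have hterm : ∀ y : V,
      (lampChi θ ω' * f y + lampChi θ (ω' + lampDelta w) * f y +
        lampChi θ (ω' + lampDelta y) * f y +
        lampChi θ (ω' + lampDelta w + lampDelta y) * f y)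
      = lampChi θ ω' * ((1 + (-1:ℂ)^(θ w).val) * ((1 + (-1:ℂ)^(θ y).val) * f y)) := by
    intro y
    rw [lampChi_add_right, lampChi_add_right, lampChi_add_right, lampChi_add_right,
      lampChi_delta, lampChi_delta]
    ring
  rw [Finset.sum_congr rfl fun y _ => hterm y, ← Finset.mul_sum]
  by_cases hw : θ w = 0
  · rw [if_pos hw]
    have hval : ∀ y : V, (1 + (-1:ℂ)^(θ w).val) * ((1 + (-1:ℂ)^(θ y).val) * f y)
        = if θ y = 0 then 4 * f y else 0 := by
      intro y
      rw [one_add_neg_one_pow, one_add_neg_one_pow, if_pos hw]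
      split_ifs <;> ring
    rw [Finset.sum_congr rfl fun y _ => hval y, ← Finset.sum_filter, ← Finset.mul_sum]
    field_simp
  · rw [if_neg hw]
    have h1 : θ w = 1 := by
      have hall : ∀ a : ZMod 2, a ≠ 0 → a = 1 := by decide
      exact hall _ hw
    rw [h1]
    norm_num [ZMod.val_one]

lemma vertexLampM_iterate_chi (G : SimpleGraph V) [DecidableRel G.Adj]
    (hdeg : ∀ x : V, 0 < G.degree x) (θ : V → ZMod 2) (f : V → ℂ) (k : ℕ) :
    (vertexLampM G)^[k] (fun p => lampChi θ p.1 * f p.2)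
      = fun p => lampChi θ p.1 * ((vertexMtheta G θ)^[k] f) p.2 := by
  induction k generalizing f with
  | zero => simp
  | succ m ih =>
      rw [Function.iterate_succ_apply, vertexLampM_chi G hdeg,
        ih (vertexMtheta G θ f)]
      funext p
      rw [← Function.iterate_succ_apply]

lemma vertexLampM_iterate_sum {ι : Type*} (G : SimpleGraph V) [DecidableRel G.Adj]
    (s : Finset ι) (c : ι → ℂ) (F : ι → ((V → ZMod 2) × V) → ℂ) (k : ℕ) :
    (vertexLampM G)^[k] (fun p => ∑ i ∈ s, c i * F i p)
      = fun p => ∑ i ∈ s, c i * ((vertexLampM G)^[k] (F i)) p := by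
  induction k generalizing F with
  | zero => simp
  | succ m ih =>
      rw [Function.iterate_succ_apply, vertexLampM_smul_sum,
        ih (fun i => vertexLampM G (F i))]
      funext p
      exact Finset.sum_congr rfl fun i _ => by rw [← Function.iterate_succ_apply]

lemma delta_expand (ω : V → ZMod 2) (x : V) :
    (fun q : (V → ZMod 2) × V => if q = (ω, x) then (1:ℂ) else 0)
      = fun q => ∑ θ : V → ZMod 2,
          (((2:ℂ) ^ Fintype.card V)⁻¹ * lampChi θ ω) *
            (lampChi θ q.1 * (if q.2 = x then 1 else 0)) := by
  have h2 : ((2:ℂ) ^ Fintype.card V) ≠ 0 := pow_ne_zero _ two_ne_zero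
  funext q
  obtain ⟨ω', y⟩ := q
  have hstep : (∑ θ : V → ZMod 2,
      (((2:ℂ) ^ Fintype.card V)⁻¹ * lampChi θ ω) *
        (lampChi θ ω' * (if y = x then 1 else 0)))
      = ((2:ℂ) ^ Fintype.card V)⁻¹ * ((∑ θ : V → ZMod 2, lampChi θ ω * lampChi θ ω') *
          (if y = x then 1 else 0)) := by
    rw [Finset.sum_mul, Finset.mul_sum]
    exact Finset.sum_congr rfl fun θ _ => by ring
  rw [hstep, sum_lampChi_mul']
  by_cases hy : y = x
  · subst hy
    by_cases hω : ω' = ω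
    · subst hω
      rw [if_pos rfl, if_pos rfl, if_pos rfl, mul_one, inv_mul_cancel₀ h2]
    · rw [if_neg (by simp [Prod.ext_iff, hω]), if_neg (fun hh => hω hh.symm)]
      ring
  · rw [if_neg (by simp [Prod.ext_iff, hy]), if_neg hy]
    ring

lemma Mtheta_iterate_spec (G : SimpleGraph V) [DecidableRel G.Adj]
    (h : (V → ZMod 2) → ℕ)
    (lam : (θ : V → ZMod 2) → Fin (h θ) → ℝ)
    (P : (θ : V → ZMod 2) → Fin (h θ) → ((V → ℂ) →ₗ[ℂ] (V → ℂ)))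
    (hspec : ∀ θ (f : V → ℂ),
      vertexMtheta G θ f = fun x => ∑ j, (lam θ j : ℂ) * P θ j f x)
    (hproj : ∀ θ (j k : Fin (h θ)) (f : V → ℂ),
      P θ j (P θ k f) = if j = k then P θ j f else 0)
    (θ : V → ZMod 2) (f : V → ℂ) :
    ∀ k : ℕ, 1 ≤ k →
      (vertexMtheta G θ)^[k] f = fun y => ∑ j, ((lam θ j : ℂ)) ^ k * P θ j f y := by
  intro k hk
  induction k with
  | zero => omega
  | succ m ih =>
      by_cases hm : 1 ≤ m
      · rw [Function.iterate_succ_apply', ih hm, hspec θ]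
        funext y
        have hfun : (fun y => ∑ j, ((lam θ j : ℂ)) ^ m * P θ j f y)
            = ∑ j, ((lam θ j : ℂ)) ^ m • P θ j f := by
          funext z
          rw [Finset.sum_apply]
          exact Finset.sum_congr rfl fun j _ => rfl
        rw [hfun]
        refine Finset.sum_congr rfl fun j _ => ?_
        have hterm : ∀ i : Fin (h θ), (((lam θ i : ℂ)) ^ m • P θ j (P θ i f)) y
            = if j = i then ((lam θ i : ℂ)) ^ m * P θ j f y else 0 := by
          intro i
          rw [hproj]
          by_cases hji : j = i <;> simp [hji]
        rw [map_sum, show (∑ i, P θ j (((lam θ i : ℂ)) ^ m • P θ i f)) y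
            = ∑ i, (((lam θ i : ℂ)) ^ m • P θ j (P θ i f)) y from ?_]
        · rw [Finset.sum_congr rfl fun i _ => hterm i, Finset.sum_ite_eq univ j _,
            if_pos (mem_univ j)]
          ring
        · rw [Finset.sum_apply]
          exact Finset.sum_congr rfl fun i _ => congrFun (map_smul (P θ j) _ _) y
      · have hm0 : m = 0 := by omega
        subst hm0
        rw [Function.iterate_one, hspec θ]
        funext y
        exact Finset.sum_congr rfl fun j _ => by rw [pow_one]

lemma mul_conj_norm' (z : ℂ) : z * (starRingEnd ℂ) z = ((‖z‖^2 : ℝ) : ℂ) := by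
  rw [Complex.mul_conj, Complex.normSq_eq_norm_sq]

lemma crossPair (h : (V → ZMod 2) → ℕ)
    (P : (θ : V → ZMod 2) → Fin (h θ) → ((V → ℂ) →ₗ[ℂ] (V → ℂ)))
    (hproj : ∀ θ (j k : Fin (h θ)) (f : V → ℂ),
      P θ j (P θ k f) = if j = k then P θ j f else 0)
    (hsa : ∀ θ (j : Fin (h θ)) (f g : V → ℂ),
      ∑ x : V, P θ j f x * (starRingEnd ℂ) (g x)
        = ∑ x : V, f x * (starRingEnd ℂ) (P θ j g x))
    (θ : V → ZMod 2) (j j' : Fin (h θ)) (f : V → ℂ) :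
    ∑ y : V, P θ j f y * (starRingEnd ℂ) (P θ j' f y)
      = if j = j' then ((∑ y : V, ‖P θ j f y‖^2 : ℝ) : ℂ) else 0 := by
  by_cases hjj : j = j'
  · subst hjj
    rw [if_pos rfl, Complex.ofReal_sum]
    exact Finset.sum_congr rfl fun y _ => mul_conj_norm' _
  · rw [if_neg hjj, hsa θ j f (P θ j' f)]
    rw [show P θ j (P θ j' f) = 0 from by rw [hproj]; exact if_neg hjj]
    simp

lemma crossSum (h : (V → ZMod 2) → ℕ)
    (lam : (θ : V → ZMod 2) → Fin (h θ) → ℝ)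
    (P : (θ : V → ZMod 2) → Fin (h θ) → ((V → ℂ) →ₗ[ℂ] (V → ℂ)))
    (hproj : ∀ θ (j k : Fin (h θ)) (f : V → ℂ),
      P θ j (P θ k f) = if j = k then P θ j f else 0)
    (hsa : ∀ θ (j : Fin (h θ)) (f g : V → ℂ),
      ∑ x : V, P θ j f x * (starRingEnd ℂ) (g x)
        = ∑ x : V, f x * (starRingEnd ℂ) (P θ j g x))
    (θ : V → ZMod 2) (s : Finset (Fin (h θ))) (f : V → ℂ) (k : ℕ) :
    ∑ y : V, (∑ j ∈ s, ((lam θ j : ℂ))^k * P θ j f y) *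
        (starRingEnd ℂ) (∑ j ∈ s, ((lam θ j : ℂ))^k * P θ j f y)
      = ((∑ j ∈ s, |lam θ j| ^ (2*k) * ∑ y : V, ‖P θ j f y‖^2 : ℝ) : ℂ) := by
  have h1 : ∀ y : V, (∑ j ∈ s, ((lam θ j : ℂ))^k * P θ j f y) *
        (starRingEnd ℂ) (∑ j ∈ s, ((lam θ j : ℂ))^k * P θ j f y)
      = ∑ j ∈ s, ∑ j' ∈ s, (((lam θ j : ℂ))^k * ((lam θ j' : ℂ))^k) *
          (P θ j f y * (starRingEnd ℂ) (P θ j' f y)) := by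
    intro y
    rw [map_sum, Finset.sum_mul_sum]
    refine Finset.sum_congr rfl fun j _ => Finset.sum_congr rfl fun j' _ => ?_
    rw [map_mul, map_pow, Complex.conj_ofReal]
    ring
  rw [Finset.sum_congr rfl fun y _ => h1 y, Finset.sum_comm]
  have h2 : ∀ j ∈ s, (∑ y : V, ∑ j' ∈ s, (((lam θ j : ℂ))^k * ((lam θ j' : ℂ))^k) *
        (P θ j f y * (starRingEnd ℂ) (P θ j' f y)))
      = ((|lam θ j| ^ (2*k) * ∑ y : V, ‖P θ j f y‖^2 : ℝ) : ℂ) := by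
    intro j hj
    rw [Finset.sum_comm]
    have h3 : ∀ j' ∈ s, (∑ y : V, (((lam θ j : ℂ))^k * ((lam θ j' : ℂ))^k) *
          (P θ j f y * (starRingEnd ℂ) (P θ j' f y)))
        = if j = j' then ((|lam θ j| ^ (2*k) * ∑ y : V, ‖P θ j f y‖^2 : ℝ) : ℂ) else 0 := by
      intro j' _
      rw [← Finset.mul_sum, crossPair h P hproj hsa θ j j' f]
      split_ifs with hjj
      · subst hjj
        rw [show |lam θ j| ^ (2*k) = ((lam θ j : ℝ))^(2*k) from
          Even.pow_abs (even_two_mul k) _]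
        push_cast
        ring
      · ring
    rw [Finset.sum_congr rfl h3, Finset.sum_ite_eq s j
      (fun _ => ((|lam θ j| ^ (2*k) * ∑ y : V, ‖P θ j f y‖^2 : ℝ) : ℂ)), if_pos hj]
  rw [Finset.sum_congr rfl h2]
  norm_cast

lemma vertexMtheta_smul (G : SimpleGraph V) [DecidableRel G.Adj] (θ : V → ZMod 2)
    (c : ℂ) (f : V → ℂ) :
    vertexMtheta G θ (fun y => c * f y) = fun w => c * vertexMtheta G θ f w := by
  funext w
  simp only [vertexMtheta]
  split_ifs with hw
  · rw [← Finset.mul_sum]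
    ring
  · ring

lemma Mtheta_delta (G : SimpleGraph V) [DecidableRel G.Adj] (θ : V → ZMod 2)
    (a b : V) (hadj : G.Adj a b) (hθa : θ a = 0) (hθb : θ b = 0)
    (hsupp : ∀ w, θ w = 0 → w = a ∨ w = b) :
    vertexMtheta G θ (fun y => if y = a then (1:ℂ) else 0)
      = fun w => if w = b then (1 / (G.degree b : ℂ)) else 0 := by
  funext w
  simp only [vertexMtheta]
  by_cases hw : θ w = 0
  · rw [if_pos hw]
    rw [Finset.sum_ite_eq' ((G.neighborFinset w).filter (fun y => θ y = 0)) a (fun _ => (1:ℂ))]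
    rcases hsupp w hw with hwa | hwb
    · subst hwa
      rw [if_neg (by simp), if_neg hadj.ne]
      ring
    · subst hwb
      rw [if_pos (by simp [hθa, hadj.symm]), if_pos rfl]
      ring
  · rw [if_neg hw, if_neg (fun hh => hw (by rw [hh]; exact hθb))]

lemma proj_sum_apply (h : (V → ZMod 2) → ℕ)
    (lam : (θ : V → ZMod 2) → Fin (h θ) → ℝ)
    (P : (θ : V → ZMod 2) → Fin (h θ) → ((V → ℂ) →ₗ[ℂ] (V → ℂ)))
    (hproj : ∀ θ (j k : Fin (h θ)) (f : V → ℂ),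
      P θ j (P θ k f) = if j = k then P θ j f else 0)
    (θ : V → ZMod 2) (j : Fin (h θ)) (f : V → ℂ) (w : V) :
    P θ j (fun z => ∑ i, ((lam θ i : ℂ)) * P θ i f z) w
      = (lam θ j : ℂ) * P θ j f w := by
  have hfun : (fun z => ∑ i, ((lam θ i : ℂ)) * P θ i f z)
      = ∑ i, ((lam θ i : ℂ)) • P θ i f := by
    funext z
    rw [Finset.sum_apply]
    exact Finset.sum_congr rfl fun i _ => rfl
  rw [hfun, map_sum, Finset.sum_apply]
  have hterm : ∀ i : Fin (h θ), (P θ j (((lam θ i : ℂ)) • P θ i f)) w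
      = if j = i then ((lam θ i : ℂ)) * P θ j f w else 0 := by
    intro i
    rw [map_smul, hproj]
    by_cases hji : j = i <;> simp [hji]
  rw [Finset.sum_congr rfl fun i _ => hterm i, Finset.sum_ite_eq univ j _,
    if_pos (mem_univ j)]

lemma sum_proj_delta (G : SimpleGraph V) [DecidableRel G.Adj]
    (h : (V → ZMod 2) → ℕ)
    (lam : (θ : V → ZMod 2) → Fin (h θ) → ℝ)
    (P : (θ : V → ZMod 2) → Fin (h θ) → ((V → ℂ) →ₗ[ℂ] (V → ℂ)))
    (hspec : ∀ θ (f : V → ℂ),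
      vertexMtheta G θ f = fun x => ∑ j, (lam θ j : ℂ) * P θ j f x)
    (hproj : ∀ θ (j k : Fin (h θ)) (f : V → ℂ),
      P θ j (P θ k f) = if j = k then P θ j f else 0)
    (hsa : ∀ θ (j : Fin (h θ)) (f g : V → ℂ),
      ∑ x : V, P θ j f x * (starRingEnd ℂ) (g x)
        = ∑ x : V, f x * (starRingEnd ℂ) (P θ j g x))
    (θ : V → ZMod 2) (x : V) (c : ℂ) (hc : c ≠ 0)
    (hM2 : vertexMtheta G θ (vertexMtheta G θ (fun z => if z = x then (1:ℂ) else 0))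
      = fun w => c * (if w = x then (1:ℂ) else 0)) :
    (∑ j : Fin (h θ), ∑ y : V, ‖P θ j (fun z => if z = x then (1:ℂ) else 0) y‖^2) = 1 := by
  set δ : V → ℂ := fun z => if z = x then (1:ℂ) else 0 with hδ
  have key : ∀ (f : V → ℂ) (w : V),
      (∑ j, P θ j (vertexMtheta G θ f) w) = vertexMtheta G θ f w := by
    intro f w
    conv_lhs => rw [hspec θ f]
    rw [hspec θ f]
    rw [Finset.sum_congr rfl fun j (_ : j ∈ univ) =>
      proj_sum_apply h lam P hproj θ j f w]
  have hQδ : ∀ w : V, (∑ j, P θ j δ w) = δ w := by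
    intro w
    have k1 := key (vertexMtheta G θ δ) w
    rw [hM2] at k1
    have k2 : ∀ j : Fin (h θ), P θ j (fun w' => c * δ w') = fun w' => c * P θ j δ w' := by
      intro j
      have : (fun w' => c * δ w') = c • δ := by funext w'; simp
      rw [this, map_smul]
      rfl
    rw [Finset.sum_congr rfl fun j (_ : j ∈ univ) => congrFun (k2 j) w] at k1
    rw [← Finset.mul_sum] at k1
    exact mul_left_cancel₀ hc k1
  have hcomplex : (∑ j : Fin (h θ), ∑ y : V, (P θ j δ y * (starRingEnd ℂ) (P θ j δ y)))
      = 1 := by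
    have e1 : ∀ j : Fin (h θ), (∑ y : V, P θ j δ y * (starRingEnd ℂ) (P θ j δ y))
        = ∑ y : V, δ y * (starRingEnd ℂ) (P θ j δ y) := by
      intro j
      rw [hsa θ j δ (P θ j δ),
        show P θ j (P θ j δ) = P θ j δ from by rw [hproj]; exact if_pos rfl]
    rw [Finset.sum_congr rfl fun j _ => e1 j, Finset.sum_comm]
    have e2 : ∀ y : V, (∑ j : Fin (h θ), δ y * (starRingEnd ℂ) (P θ j δ y))
        = δ y * (starRingEnd ℂ) (δ y) := by
      intro y
      rw [← Finset.mul_sum, ← map_sum, hQδ y]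
    rw [Finset.sum_congr rfl fun y _ => e2 y]
    have e3 : ∀ y : V, δ y * (starRingEnd ℂ) (δ y) = if y = x then 1 else 0 := by
      intro y
      by_cases hy : y = x <;> simp [hδ, hy]
    rw [Finset.sum_congr rfl fun y _ => e3 y, Finset.sum_ite_eq' univ x (fun _ => (1:ℂ)),
      if_pos (mem_univ x)]
  rw [Finset.sum_congr rfl (fun j (_ : j ∈ (univ : Finset (Fin (h θ)))) =>
    Finset.sum_congr rfl fun y _ => mul_conj_norm' (P θ j δ y))] at hcomplex
  exact_mod_cast hcomplex


/-- Upper bound lemma. Suppose `X` is connected and the spectral data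
of `M_{0_X}` is indexed so that `λ_{0_X,1} = 1` and `P_{0_X,1}` is the orthogonal
projection onto the constant functions. Then for every `k ≥ 0` and `(ω,x) ∈ 𝓛(X)`:
`‖𝓜_X^k(δ_ω⊗δ_x) − (2^{|X|}|X|)^{−1} 1‖_TV² ≤
 |X|·{ Σ_{θ ≠ 0_X} Σ_{j=1}^{h(θ)} |λ_{θ,j}|^{2k} ‖P_{θ,j}δ_x‖² +
       Σ_{j=2}^{h(0_X)} |λ_{0_X,j}|^{2k} ‖P_{0_X,j}δ_x‖² }`. -/
theorem vertex_lamplighter_upper_bound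
    (G : SimpleGraph V) [DecidableRel G.Adj] (hdeg : ∀ x : V, 0 < G.degree x)
    (hconn : G.Connected)
    (h : (V → ZMod 2) → ℕ)
    (lam : (θ : V → ZMod 2) → Fin (h θ) → ℝ)
    (P : (θ : V → ZMod 2) → Fin (h θ) → ((V → ℂ) →ₗ[ℂ] (V → ℂ)))
    (hlam_ne : ∀ θ j, lam θ j ≠ 0)
    (hlam_inj : ∀ θ, Function.Injective (lam θ))
    (hspec : ∀ θ (f : V → ℂ),
      vertexMtheta G θ f = fun x => ∑ j, (lam θ j : ℂ) * P θ j f x)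
    (hproj : ∀ θ (j k : Fin (h θ)) (f : V → ℂ),
      P θ j (P θ k f) = if j = k then P θ j f else 0)
    (hsa : ∀ θ (j : Fin (h θ)) (f g : V → ℂ),
      ∑ x : V, P θ j f x * (starRingEnd ℂ) (g x)
        = ∑ x : V, f x * (starRingEnd ℂ) (P θ j g x))
    (h0pos : 0 < h (0 : V → ZMod 2))
    (hlam1 : lam 0 ⟨0, h0pos⟩ = 1)
    (hP1 : ∀ f : V → ℂ, P 0 ⟨0, h0pos⟩ f = fun _ => (∑ x : V, f x) / (Fintype.card V : ℂ))
    (k : ℕ) (ω : V → ZMod 2) (x : V) :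
    ((1 / 2 : ℝ) * ∑ p : (V → ZMod 2) × V,
        ‖((vertexLampM G)^[k] (fun q => if q = (ω, x) then 1 else 0)) p
          - (1 / (2 ^ Fintype.card V * Fintype.card V) : ℂ)‖) ^ 2
      ≤ (Fintype.card V : ℝ) *
          ((∑ θ ∈ univ.filter (fun θ : V → ZMod 2 => θ ≠ 0), ∑ j : Fin (h θ),
              |lam θ j| ^ (2 * k) *
                ∑ y : V, ‖(P θ j fun z => if z = x then 1 else 0) y‖ ^ 2)
            + ∑ j ∈ univ.filter (fun j : Fin (h (0 : V → ZMod 2)) => j ≠ ⟨0, h0pos⟩),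
                |lam 0 j| ^ (2 * k) *
                  ∑ y : V, ‖(P 0 j fun z => if z = x then 1 else 0) y‖ ^ 2) := by
  classical
  set n := Fintype.card V with hn
  set dx : V → ℂ := fun z => if z = x then (1:ℂ) else 0 with hdx
  have h2C : ((2:ℂ) ^ n) ≠ 0 := pow_ne_zero _ two_ne_zero
  have h2R : (0:ℝ) < (2:ℝ) ^ n := by positivity
  obtain ⟨z, hz⟩ : ∃ z, G.Adj x z := by
    have := hdeg x
    rwa [← SimpleGraph.degree_pos_iff_exists_adj]
  have hxz : x ≠ z := G.ne_of_adj hz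
  have hn2 : 2 ≤ n := by
    have : Nontrivial V := ⟨⟨x, z, hxz⟩⟩
    exact Fintype.one_lt_card
  have hnpos : 0 < n := lt_of_lt_of_le (by norm_num) hn2
  have hn0 : (0:ℝ) < (n:ℝ) := by exact_mod_cast hnpos
  have hcard : (Fintype.card ((V → ZMod 2) × V) : ℝ) = (2:ℝ)^n * (n:ℝ) := by
    rw [Fintype.card_prod, Fintype.card_fun, ZMod.card]
    push_cast
    ring
  have hsum_delta : (∑ w : V, dx w) = 1 := by
    rw [hdx, Finset.sum_ite_eq' univ x (fun _ => (1:ℂ)), if_pos (mem_univ x)]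
  -- nonnegativity of the RHS bracket terms
  have hWnn : ∀ (θ : V → ZMod 2) (s : Finset (Fin (h θ))),
      (0:ℝ) ≤ ∑ j ∈ s, |lam θ j| ^ (2*k) * ∑ y : V, ‖P θ j dx y‖^2 :=
    fun θ s => Finset.sum_nonneg fun j _ => mul_nonneg (pow_nonneg (abs_nonneg _) _)
      (Finset.sum_nonneg fun y _ => sq_nonneg _)
  rcases Nat.eq_zero_or_pos k with hk0 | hk1
  · -- case k = 0
    subst hk0
    simp only [Function.iterate_zero, id_eq, mul_zero, pow_zero, one_mul]
    -- LHS ≤ 1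
    have hnormite : ∀ p : (V → ZMod 2) × V,
        ‖(if p = (ω,x) then (1:ℂ) else 0)‖ = (if p = (ω,x) then (1:ℝ) else 0) := by
      intro p
      split_ifs <;> simp
    have hnormc : ‖(1 / ((2:ℂ)^n * (n:ℂ)))‖ = ((2:ℝ)^n * (n:ℝ))⁻¹ := by
      have hcast : ((2:ℂ)^n * (n:ℂ)) = (((2:ℝ)^n * (n:ℝ) : ℝ) : ℂ) := by push_cast; ring
      rw [one_div, norm_inv, hcast, Complex.norm_real,
        Real.norm_of_nonneg (by positivity)]
    have hTle : (∑ p : (V → ZMod 2) × V,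
        ‖(if p = (ω,x) then (1:ℂ) else 0) - 1/((2:ℂ)^n*(n:ℂ))‖) ≤ 2 := by
      calc (∑ p : (V → ZMod 2) × V, ‖(if p = (ω,x) then (1:ℂ) else 0) - 1/((2:ℂ)^n*(n:ℂ))‖)
          ≤ ∑ p : (V → ZMod 2) × V,
              (‖(if p = (ω,x) then (1:ℂ) else 0)‖ + ‖(1/((2:ℂ)^n*(n:ℂ)))‖) :=
            Finset.sum_le_sum fun p _ => norm_sub_le _ _
        _ = (∑ p : (V → ZMod 2) × V, ‖(if p = (ω,x) then (1:ℂ) else 0)‖)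
            + ∑ p : (V → ZMod 2) × V, ‖(1/((2:ℂ)^n*(n:ℂ)))‖ := Finset.sum_add_distrib
        _ = 1 + 1 := by
            congr 1
            · rw [Finset.sum_congr rfl fun p _ => hnormite p,
                Finset.sum_ite_eq' univ ((ω,x) : (V → ZMod 2) × V) (fun _ => (1:ℝ)),
                if_pos (mem_univ _)]
            · rw [Finset.sum_const, card_univ, nsmul_eq_mul, hnormc, hcard,
                mul_inv_cancel₀ (by positivity)]
        _ = 2 := by norm_num
    have hT0 : (0:ℝ) ≤ ∑ p : (V → ZMod 2) × V,
        ‖(if p = (ω,x) then (1:ℂ) else 0) - 1/((2:ℂ)^n*(n:ℂ))‖ :=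
      Finset.sum_nonneg fun p _ => norm_nonneg _
    have hLHS1 : ((1/2:ℝ) * ∑ p : (V → ZMod 2) × V,
        ‖(if p = (ω,x) then (1:ℂ) else 0) - 1/((2:ℂ)^n*(n:ℂ))‖)^2 ≤ 1 := by
      nlinarith
    -- the trick configuration θ*
    set θs : V → ZMod 2 := fun w => if w = x ∨ w = z then 0 else 1 with hθs
    have hθsx : θs x = 0 := if_pos (Or.inl rfl)
    have hθsz : θs z = 0 := if_pos (Or.inr rfl)
    have hsupp : ∀ w, θs w = 0 → w = x ∨ w = z := by
      intro w hw
      by_contra hc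
      rw [hθs] at hw
      simp only at hw
      rw [if_neg hc] at hw
      exact one_ne_zero hw
    have hM1 := Mtheta_delta G θs x z hz hθsx hθsz hsupp
    have hM1' := Mtheta_delta G θs z x hz.symm hθsz hθsx (fun w hw => (hsupp w hw).symm)
    have hdz : ((G.degree z : ℂ)) ≠ 0 := Nat.cast_ne_zero.2 (hdeg z).ne'
    have hdxx : ((G.degree x : ℂ)) ≠ 0 := Nat.cast_ne_zero.2 (hdeg x).ne'
    have hc : (1/(G.degree z:ℂ)) * (1/(G.degree x:ℂ)) ≠ 0 :=
      mul_ne_zero (one_div_ne_zero hdz) (one_div_ne_zero hdxx)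
    have hM2 : vertexMtheta G θs (vertexMtheta G θs (fun z' => if z' = x then (1:ℂ) else 0))
        = fun w => ((1/(G.degree z:ℂ)) * (1/(G.degree x:ℂ))) * (if w = x then (1:ℂ) else 0) := by
      rw [hM1]
      rw [show (fun w => if w = z then 1/(G.degree z:ℂ) else 0)
          = fun w => (1/(G.degree z:ℂ)) * (if w = z then (1:ℂ) else 0) from by
        funext w; split_ifs <;> ring]
      rw [vertexMtheta_smul G θs (1/(G.degree z:ℂ)) (fun w => if w = z then (1:ℂ) else 0)]
      funext w
      rw [congrFun hM1' w]
      split_ifs <;> ring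
    have htrick := sum_proj_delta G h lam P hspec hproj hsa θs x
      ((1/(G.degree z:ℂ)) * (1/(G.degree x:ℂ))) hc hM2
    rw [← hdx] at htrick
    by_cases hθ0 : θs = 0
    · -- θ* = 0 : use the second (θ = 0) sum
      rw [hθ0] at htrick
      have hsplit := Finset.sum_filter_add_sum_filter_not univ
        (fun j : Fin (h (0 : V → ZMod 2)) => j ≠ ⟨0, h0pos⟩)
        (fun j => ∑ y : V, ‖P 0 j dx y‖^2)
      rw [show Finset.filter (fun j : Fin (h (0 : V → ZMod 2)) => ¬ j ≠ ⟨0, h0pos⟩) univ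
          = {(⟨0, h0pos⟩ : Fin (h (0 : V → ZMod 2)))} from by ext j; simp,
        Finset.sum_singleton, htrick] at hsplit
      have hP1x : (∑ y : V, ‖P 0 (⟨0, h0pos⟩ : Fin (h (0 : V → ZMod 2))) dx y‖^2)
          = (n:ℝ)⁻¹ := by
        rw [hP1 dx]
        beta_reduce
        have hcongr : (∑ _y : V, ‖(∑ w : V, dx w) / (n:ℂ)‖^2)
            = ∑ _y : V, ‖(1:ℂ)/(n:ℂ)‖^2 :=
          Finset.sum_congr rfl fun y _ => by rw [hsum_delta]
        rw [hcongr]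
        have : ‖(1:ℂ)/(n:ℂ)‖ = (n:ℝ)⁻¹ := by
          rw [norm_div, norm_one, Complex.norm_natCast]
          exact one_div _
        rw [this, Finset.sum_const, card_univ, nsmul_eq_mul, ← hn]
        field_simp
      have h2nd : (∑ j ∈ univ.filter (fun j : Fin (h (0 : V → ZMod 2)) => j ≠ ⟨0, h0pos⟩),
          ∑ y : V, ‖P 0 j dx y‖^2) = 1 - (n:ℝ)⁻¹ := by
        rw [hP1x] at hsplit
        linarith
      have h1st : (0:ℝ) ≤ ∑ θ ∈ univ.filter (fun θ : V → ZMod 2 => θ ≠ 0),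
          ∑ j : Fin (h θ), ∑ y : V, ‖P θ j dx y‖^2 :=
        Finset.sum_nonneg fun θ _ => Finset.sum_nonneg fun j _ =>
          Finset.sum_nonneg fun y _ => sq_nonneg _
      have hninv : (n:ℝ)⁻¹ ≤ (1:ℝ)/2 := by
        rw [one_div]
        apply inv_anti₀ (by norm_num)
        exact_mod_cast hn2
      calc ((1/2:ℝ) * ∑ p : (V → ZMod 2) × V,
            ‖(if p = (ω,x) then (1:ℂ) else 0) - 1/((2:ℂ)^n*(n:ℂ))‖)^2
          ≤ 1 := hLHS1
        _ ≤ (n:ℝ) * ((∑ θ ∈ univ.filter (fun θ : V → ZMod 2 => θ ≠ 0),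
              ∑ j : Fin (h θ), ∑ y : V, ‖P θ j dx y‖^2)
            + ∑ j ∈ univ.filter (fun j : Fin (h (0 : V → ZMod 2)) => j ≠ ⟨0, h0pos⟩),
                ∑ y : V, ‖P 0 j dx y‖^2) := by
            rw [h2nd]
            have hn2' : (2:ℝ) ≤ (n:ℝ) := by exact_mod_cast hn2
            have : (n:ℝ) * (1 - (n:ℝ)⁻¹) = (n:ℝ) - 1 := by
              field_simp
            nlinarith
    · -- θ* ≠ 0 : use the θ* term in the first sum
      have hmem : θs ∈ univ.filter (fun θ : V → ZMod 2 => θ ≠ 0) :=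
        Finset.mem_filter.mpr ⟨mem_univ _, hθ0⟩
      have hge := Finset.single_le_sum
        (f := fun θ : V → ZMod 2 => ∑ j : Fin (h θ), ∑ y : V, ‖P θ j dx y‖^2)
        (fun θ _ => Finset.sum_nonneg fun j _ => Finset.sum_nonneg fun y _ => sq_nonneg _)
        hmem
      beta_reduce at hge
      rw [htrick] at hge
      have h2nd0 : (0:ℝ) ≤ ∑ j ∈ univ.filter
          (fun j : Fin (h (0 : V → ZMod 2)) => j ≠ ⟨0, h0pos⟩), ∑ y : V, ‖P 0 j dx y‖^2 :=
        Finset.sum_nonneg fun j _ => Finset.sum_nonneg fun y _ => sq_nonneg _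
      calc ((1/2:ℝ) * ∑ p : (V → ZMod 2) × V,
            ‖(if p = (ω,x) then (1:ℂ) else 0) - 1/((2:ℂ)^n*(n:ℂ))‖)^2
          ≤ 1 := hLHS1
        _ ≤ (n:ℝ) * ((∑ θ ∈ univ.filter (fun θ : V → ZMod 2 => θ ≠ 0),
              ∑ j : Fin (h θ), ∑ y : V, ‖P θ j dx y‖^2)
            + ∑ j ∈ univ.filter (fun j : Fin (h (0 : V → ZMod 2)) => j ≠ ⟨0, h0pos⟩),
                ∑ y : V, ‖P 0 j dx y‖^2) := by
            have hn2' : (2:ℝ) ≤ (n:ℝ) := by exact_mod_cast hn2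
            nlinarith
  · -- main case k ≥ 1
    set J : (θ : V → ZMod 2) → Finset (Fin (h θ)) :=
      fun θ => univ.filter (fun j => θ ≠ 0 ∨ (j:ℕ) ≠ 0) with hJ
    set g : (V → ZMod 2) → V → ℂ :=
      fun θ y => ∑ j ∈ J θ, ((lam θ j : ℂ))^k * P θ j dx y with hg_def
    set S : ℝ := ∑ θ : V → ZMod 2, ∑ j ∈ J θ, |lam θ j| ^ (2*k) * ∑ y : V, ‖P θ j dx y‖^2
      with hS_def
    have hg : ∀ θ : V → ZMod 2, ((vertexMtheta G θ)^[k] dx)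
        = fun y => g θ y + (if θ = 0 then ((n : ℂ))⁻¹ else 0) := by
      intro θ
      rw [Mtheta_iterate_spec G h lam P hspec hproj θ dx k hk1]
      funext y
      by_cases hθ : θ = 0
      · subst hθ
        rw [if_pos rfl]
        have hsplit := Finset.sum_filter_add_sum_filter_not univ
          (fun j : Fin (h 0) => (0 : V → ZMod 2) ≠ 0 ∨ (j:ℕ) ≠ 0)
          (fun j => ((lam 0 j : ℂ))^k * P 0 j dx y)
        rw [← hsplit]
        congr 1
        have hone : Finset.filter
            (fun j : Fin (h 0) => ¬((0 : V → ZMod 2) ≠ 0 ∨ (j:ℕ) ≠ 0)) univ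
            = {(⟨0, h0pos⟩ : Fin (h 0))} := by
          ext j
          simp [Fin.ext_iff]
        rw [hone, Finset.sum_singleton, hlam1, hP1 dx]
        rw [show (∑ w : V, dx w) = 1 from hsum_delta]
        push_cast
        rw [one_pow, one_mul, one_div]
      · rw [if_neg hθ, add_zero]
        rw [show g θ y = ∑ j ∈ J θ, ((lam θ j : ℂ))^k * P θ j dx y from rfl,
          show J θ = univ from Finset.filter_true_of_mem fun j _ => Or.inl hθ]
    have hiter : (vertexLampM G)^[k] (fun q : (V → ZMod 2) × V => if q = (ω,x) then (1:ℂ) else 0)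
        = fun p => ∑ θ : V → ZMod 2, (((2:ℂ)^n)⁻¹ * lampChi θ ω) *
            (lampChi θ p.1 * ((vertexMtheta G θ)^[k] dx) p.2) := by
      calc (vertexLampM G)^[k] (fun q : (V → ZMod 2) × V => if q = (ω,x) then (1:ℂ) else 0)
          = (vertexLampM G)^[k] (fun q : (V → ZMod 2) × V => ∑ θ : V → ZMod 2,
              (((2:ℂ)^n)⁻¹ * lampChi θ ω) * (lampChi θ q.1 * (if q.2 = x then 1 else 0))) := by
            rw [delta_expand ω x]
        _ = fun p => ∑ θ : V → ZMod 2, (((2:ℂ)^n)⁻¹ * lampChi θ ω) *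
              ((vertexLampM G)^[k] (fun q : (V → ZMod 2) × V =>
                lampChi θ q.1 * (if q.2 = x then 1 else 0))) p :=
            vertexLampM_iterate_sum G univ _ _ k
        _ = fun p => ∑ θ : V → ZMod 2, (((2:ℂ)^n)⁻¹ * lampChi θ ω) *
              (lampChi θ p.1 * ((vertexMtheta G θ)^[k] dx) p.2) := by
            funext p
            refine Finset.sum_congr rfl fun θ _ => ?_
            have := vertexLampM_iterate_chi G hdeg θ dx k
            rw [show (fun q : (V → ZMod 2) × V => lampChi θ q.1 * (if q.2 = x then (1:ℂ) else 0))
              = (fun q : (V → ZMod 2) × V => lampChi θ q.1 * dx q.2) from rfl, this]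
    set u : (V → ZMod 2) × V → ℂ :=
      fun p => ((2:ℂ)^n)⁻¹ * ∑ θ : V → ZMod 2, lampChi θ ω * (lampChi θ p.1 * g θ p.2)
      with hu_def
    have hu : ∀ p : (V → ZMod 2) × V,
        ((vertexLampM G)^[k] (fun q : (V → ZMod 2) × V => if q = (ω,x) then (1:ℂ) else 0)) p
          - (1 / ((2:ℂ) ^ n * (n : ℂ))) = u p := by
      intro p
      rw [hiter]
      have hite : (1 / ((2:ℂ)^n * (n:ℂ)))
          = ∑ θ : V → ZMod 2, (if θ = (0 : V → ZMod 2) then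
              (((2:ℂ)^n)⁻¹ * lampChi θ ω) * (lampChi θ p.1 * ((n:ℂ))⁻¹) else 0) := by
        rw [Finset.sum_ite_eq' univ (0 : V → ZMod 2)
          (fun θ => (((2:ℂ)^n)⁻¹ * lampChi θ ω) * (lampChi θ p.1 * ((n:ℂ))⁻¹)),
          if_pos (mem_univ _), lampChi_zero_left, lampChi_zero_left]
        field_simp
      rw [sub_eq_iff_eq_add, hu_def, hite]
      beta_reduce
      rw [Finset.mul_sum, ← Finset.sum_add_distrib]
      refine Finset.sum_congr rfl fun θ _ => ?_
      rw [congrFun (hg θ) p.2]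
      by_cases hθ : θ = 0
      · subst hθ
        rw [if_pos rfl, if_pos rfl]
        ring
      · rw [if_neg hθ, if_neg hθ]
        ring
    have hpar : (∑ p : (V → ZMod 2) × V, ‖u p‖^2) = ((2:ℝ)^n)⁻¹ * S := by
      have hconjc : (starRingEnd ℂ) (((2:ℂ)^n)⁻¹) = ((2:ℂ)^n)⁻¹ := by simp [map_ofNat]
      have hC : (∑ p : (V → ZMod 2) × V, u p * (starRingEnd ℂ) (u p))
          = ((((2:ℝ)^n)⁻¹ * S : ℝ) : ℂ) := by
        rw [Fintype.sum_prod_type]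
        have step1 : ∀ (ω' : V → ZMod 2) (y : V), u (ω', y) * (starRingEnd ℂ) (u (ω', y))
            = ∑ θ : V → ZMod 2, ∑ θ' : V → ZMod 2,
                (((2:ℂ)^n)⁻¹ * ((2:ℂ)^n)⁻¹) * ((lampChi θ ω * lampChi θ' ω) *
                  ((lampChi θ ω' * lampChi θ' ω') * (g θ y * (starRingEnd ℂ) (g θ' y)))) := by
          intro ω' y
          show (((2:ℂ)^n)⁻¹ * ∑ θ : V → ZMod 2, lampChi θ ω * (lampChi θ (ω', y).1 * g θ (ω', y).2)) *
              (starRingEnd ℂ) (((2:ℂ)^n)⁻¹ * ∑ θ : V → ZMod 2, lampChi θ ω * (lampChi θ (ω', y).1 * g θ (ω', y).2)) = _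
          simp only
          rw [map_mul, hconjc, map_sum]
          have hconjsum : (∑ θ' : V → ZMod 2, (starRingEnd ℂ) (lampChi θ' ω * (lampChi θ' ω' * g θ' y)))
              = ∑ θ' : V → ZMod 2, lampChi θ' ω * (lampChi θ' ω' * (starRingEnd ℂ) (g θ' y)) :=
            Finset.sum_congr rfl fun θ' _ => by
              rw [map_mul, map_mul, conj_lampChi, conj_lampChi]
          rw [hconjsum]
          rw [show (((2:ℂ)^n)⁻¹ * ∑ θ : V → ZMod 2, lampChi θ ω * (lampChi θ ω' * g θ y)) *
              (((2:ℂ)^n)⁻¹ * ∑ θ' : V → ZMod 2, lampChi θ' ω * (lampChi θ' ω' * (starRingEnd ℂ) (g θ' y)))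
              = (((2:ℂ)^n)⁻¹ * ((2:ℂ)^n)⁻¹) *
                ((∑ θ : V → ZMod 2, lampChi θ ω * (lampChi θ ω' * g θ y)) *
                  (∑ θ' : V → ZMod 2, lampChi θ' ω * (lampChi θ' ω' * (starRingEnd ℂ) (g θ' y))))
            from by ring, Finset.sum_mul_sum, Finset.mul_sum]
          refine Finset.sum_congr rfl fun θ _ => ?_
          rw [Finset.mul_sum]
          exact Finset.sum_congr rfl fun θ' _ => by ring
        rw [Finset.sum_congr rfl fun ω' (_ : ω' ∈ univ) =>
          Finset.sum_congr rfl fun y (_ : y ∈ univ) => step1 ω' y]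
        -- reorder the four sums: ω', y, θ, θ' → θ, θ', ω', y
        rw [Finset.sum_congr rfl fun ω' (_ : ω' ∈ univ) => Finset.sum_comm]
        rw [Finset.sum_congr rfl fun ω' (_ : ω' ∈ univ) =>
          Finset.sum_congr rfl fun θ (_ : θ ∈ univ) => Finset.sum_comm]
        rw [Finset.sum_comm]
        rw [Finset.sum_congr rfl fun θ (_ : θ ∈ univ) => Finset.sum_comm]
        -- now: ∑ θ ∑ θ' ∑ ω' ∑ y
        have step3 : ∀ θ θ' : V → ZMod 2,
            (∑ ω' : V → ZMod 2, ∑ y : V,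
              (((2:ℂ)^n)⁻¹ * ((2:ℂ)^n)⁻¹) * ((lampChi θ ω * lampChi θ' ω) *
                ((lampChi θ ω' * lampChi θ' ω') * (g θ y * (starRingEnd ℂ) (g θ' y)))))
            = if θ = θ' then ((2:ℂ)^n)⁻¹ * (∑ y : V, g θ y * (starRingEnd ℂ) (g θ y)) else 0 := by
          intro θ θ'
          have hpull : (∑ ω' : V → ZMod 2, ∑ y : V,
              (((2:ℂ)^n)⁻¹ * ((2:ℂ)^n)⁻¹) * ((lampChi θ ω * lampChi θ' ω) *
                ((lampChi θ ω' * lampChi θ' ω') * (g θ y * (starRingEnd ℂ) (g θ' y)))))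
              = (((2:ℂ)^n)⁻¹ * ((2:ℂ)^n)⁻¹) * ((lampChi θ ω * lampChi θ' ω) *
                  ((∑ ω' : V → ZMod 2, lampChi θ ω' * lampChi θ' ω') *
                    (∑ y : V, g θ y * (starRingEnd ℂ) (g θ' y)))) := by
            have inner : ∀ ω' : V → ZMod 2,
                (∑ y : V, (((2:ℂ)^n)⁻¹ * ((2:ℂ)^n)⁻¹) * ((lampChi θ ω * lampChi θ' ω) *
                  ((lampChi θ ω' * lampChi θ' ω') * (g θ y * (starRingEnd ℂ) (g θ' y)))))
                = ((((2:ℂ)^n)⁻¹ * ((2:ℂ)^n)⁻¹) * ((lampChi θ ω * lampChi θ' ω) *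
                    (lampChi θ ω' * lampChi θ' ω'))) *
                  (∑ y : V, g θ y * (starRingEnd ℂ) (g θ' y)) := by
              intro ω'
              rw [Finset.mul_sum]
              exact Finset.sum_congr rfl fun y _ => by ring
            rw [Finset.sum_congr rfl fun ω' (_ : ω' ∈ univ) => inner ω']
            calc (∑ ω' : V → ZMod 2, ((((2:ℂ)^n)⁻¹ * ((2:ℂ)^n)⁻¹) * ((lampChi θ ω * lampChi θ' ω) *
                    (lampChi θ ω' * lampChi θ' ω'))) *
                  (∑ y : V, g θ y * (starRingEnd ℂ) (g θ' y)))
                = (∑ ω' : V → ZMod 2, ((((2:ℂ)^n)⁻¹ * ((2:ℂ)^n)⁻¹) * ((lampChi θ ω * lampChi θ' ω) *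
                      (∑ y : V, g θ y * (starRingEnd ℂ) (g θ' y)))) * (lampChi θ ω' * lampChi θ' ω')) :=
                  Finset.sum_congr rfl fun ω' _ => by ring
              _ = ((((2:ℂ)^n)⁻¹ * ((2:ℂ)^n)⁻¹) * ((lampChi θ ω * lampChi θ' ω) *
                      (∑ y : V, g θ y * (starRingEnd ℂ) (g θ' y)))) *
                    (∑ ω' : V → ZMod 2, lampChi θ ω' * lampChi θ' ω') :=
                  (Finset.mul_sum _ _ _).symm
              _ = (((2:ℂ)^n)⁻¹ * ((2:ℂ)^n)⁻¹) * ((lampChi θ ω * lampChi θ' ω) *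
                    ((∑ ω' : V → ZMod 2, lampChi θ ω' * lampChi θ' ω') *
                      (∑ y : V, g θ y * (starRingEnd ℂ) (g θ' y)))) := by ring
          rw [hpull, sum_lampChi_mul θ θ']
          by_cases hh : θ = θ'
          · subst hh
            rw [if_pos rfl, if_pos rfl, lampChi_mul_self]
            rw [show (((2:ℂ)^n)⁻¹ * ((2:ℂ)^n)⁻¹) * ((1:ℂ) * (((2:ℂ)^n) *
                (∑ y : V, g θ y * (starRingEnd ℂ) (g θ y))))
              = (((2:ℂ)^n)⁻¹ * (((2:ℂ)^n)⁻¹ * ((2:ℂ)^n))) *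
                (∑ y : V, g θ y * (starRingEnd ℂ) (g θ y)) from by ring,
              inv_mul_cancel₀ h2C]
            ring
          · rw [if_neg hh, if_neg hh]
            ring
        rw [Finset.sum_congr rfl fun θ (_ : θ ∈ univ) =>
          Finset.sum_congr rfl fun θ' (_ : θ' ∈ univ) => step3 θ θ']
        rw [Finset.sum_congr rfl fun θ (_ : θ ∈ univ) =>
          Finset.sum_ite_eq univ θ
            (fun θ' => ((2:ℂ)^n)⁻¹ * (∑ y : V, g θ y * (starRingEnd ℂ) (g θ y)))]
        rw [Finset.sum_congr rfl fun θ (_ : θ ∈ univ) => if_pos (mem_univ θ)]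
        have hcrossall : (∑ θ : V → ZMod 2, ((2:ℂ)^n)⁻¹ * (∑ y : V, g θ y * (starRingEnd ℂ) (g θ y)))
            = ∑ θ : V → ZMod 2, ((2:ℂ)^n)⁻¹ *
                ((∑ j ∈ J θ, |lam θ j| ^ (2*k) * ∑ y : V, ‖P θ j dx y‖^2 : ℝ) : ℂ) :=
          Finset.sum_congr rfl fun θ _ => by
            rw [show (∑ y : V, g θ y * (starRingEnd ℂ) (g θ y))
              = ∑ y : V, (∑ j ∈ J θ, ((lam θ j : ℂ))^k * P θ j dx y) *
                  (starRingEnd ℂ) (∑ j ∈ J θ, ((lam θ j : ℂ))^k * P θ j dx y) from rfl,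
              crossSum h lam P hproj hsa θ (J θ) dx k]
        rw [hcrossall]
        rw [← Finset.mul_sum, hS_def]
        push_cast
        ring
      have hre : ((∑ p : (V → ZMod 2) × V, ‖u p‖^2 : ℝ) : ℂ)
          = ∑ p : (V → ZMod 2) × V, u p * (starRingEnd ℂ) (u p) := by
        rw [Complex.ofReal_sum]
        exact Finset.sum_congr rfl fun p _ => (mul_conj_norm' (u p)).symm
      have := hre.trans hC
      exact_mod_cast this
    -- Cauchy–Schwarz and final assembly
    have hcs : (∑ p : (V → ZMod 2) × V, ‖u p‖)^2
        ≤ ((2:ℝ)^n * (n:ℝ)) * (((2:ℝ)^n)⁻¹ * S) := by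
      have hcs0 := Finset.sum_mul_sq_le_sq_mul_sq univ (fun _ : (V → ZMod 2) × V => (1:ℝ))
        (fun p => ‖u p‖)
      simp only [one_mul, one_pow] at hcs0
      rw [Finset.sum_const, card_univ, nsmul_eq_mul, mul_one] at hcs0
      calc (∑ p : (V → ZMod 2) × V, ‖u p‖)^2
          ≤ (Fintype.card ((V → ZMod 2) × V) : ℝ) * (∑ p : (V → ZMod 2) × V, ‖u p‖^2) :=
            hcs0
        _ = ((2:ℝ)^n * (n:ℝ)) * (((2:ℝ)^n)⁻¹ * S) := by rw [hcard, hpar]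
    have hS0 : (0:ℝ) ≤ S := by
      rw [hS_def]
      exact Finset.sum_nonneg fun θ _ => hWnn θ (J θ)
    have hLHS : (∑ p : (V → ZMod 2) × V,
        ‖((vertexLampM G)^[k] (fun q : (V → ZMod 2) × V => if q = (ω,x) then (1:ℂ) else 0)) p
          - (1 / ((2:ℂ) ^ n * (n:ℂ)))‖) = ∑ p : (V → ZMod 2) × V, ‖u p‖ :=
      Finset.sum_congr rfl fun p _ => by rw [hu p]
    have hSeq : S = (∑ θ ∈ univ.filter (fun θ : V → ZMod 2 => θ ≠ 0), ∑ j : Fin (h θ),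
          |lam θ j| ^ (2 * k) * ∑ y : V, ‖P θ j dx y‖ ^ 2)
        + ∑ j ∈ univ.filter (fun j : Fin (h (0 : V → ZMod 2)) => j ≠ ⟨0, h0pos⟩),
            |lam 0 j| ^ (2 * k) * ∑ y : V, ‖P 0 j dx y‖ ^ 2 := by
      rw [hS_def, ← Finset.sum_filter_add_sum_filter_not univ (fun θ : V → ZMod 2 => θ ≠ 0)]
      congr 1
      · refine Finset.sum_congr rfl fun θ hθ => ?_
        rw [show J θ = univ from Finset.filter_true_of_mem fun j _ =>
          Or.inl (Finset.mem_filter.mp hθ).2]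
      · rw [show Finset.filter (fun θ : V → ZMod 2 => ¬ θ ≠ 0) univ = {(0 : V → ZMod 2)} from by
          ext θ; simp]
        rw [Finset.sum_singleton]
        refine Finset.sum_congr ?_ fun j _ => rfl
        rw [hJ]
        ext j
        simp [Fin.ext_iff]
    rw [hLHS, ← hSeq]
    calc ((1/2:ℝ) * ∑ p : (V → ZMod 2) × V, ‖u p‖)^2
        = (1/4) * (∑ p : (V → ZMod 2) × V, ‖u p‖)^2 := by ring
      _ ≤ (1/4) * (((2:ℝ)^n * (n:ℝ)) * (((2:ℝ)^n)⁻¹ * S)) := by nlinarith [hcs]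
      _ = (1/4) * ((n:ℝ) * S) := by
          rw [show ((2:ℝ)^n * (n:ℝ)) * (((2:ℝ)^n)⁻¹ * S)
            = ((2:ℝ)^n * ((2:ℝ)^n)⁻¹) * ((n:ℝ) * S) from by ring,
            mul_inv_cancel₀ (ne_of_gt h2R), one_mul]
      _ ≤ (n:ℝ) * S := by
          have hns : (0:ℝ) ≤ (n:ℝ) * S := mul_nonneg hn0.le hS0
          linarith
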